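/- arXiv:1812.02511 — 2 statements merged into one kernel-verified Lean document; each statement's English description precedes it below -/
import Mathlib

section
/- There exist exactly 196 binary operations on a 3-element set satisfying the Moufang identity (x·y)·(z·x) = (x·(y·z))·x. -/
/-!
A binary operation on `Fin n` is determined by its table, i.e. by the `n * n` base-`n` digits
of a natural number below `n ^ (n * n)`. Counting Moufang operations on `Fin 3` thus becomes
counting the `k < 19683` whose digit table satisfies the identity, a finite check that the
kernel carries out.
-/

def IsMoufang {α : Type*} (f : α → α → α) : Prop :=
  ∀ x y z, f (f x y) (f z x) = f (f x (f y z)) x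

instance {α : Type*} [Fintype α] [DecidableEq α] (f : α → α → α) : Decidable (IsMoufang f) := by
  unfold IsMoufang
  infer_instance

open scoped Count in
theorem Fintype.card_subtype_fin_eq_count (p : ℕ → Prop) [DecidablePred p] (N : ℕ) :
    Fintype.card {i : Fin N // p i} = Nat.count p N := by
  rw [Nat.count_eq_card_fintype]
  exact Fintype.card_congr
    ⟨fun i => ⟨i, i.1.2, i.2⟩, fun k => ⟨⟨k, k.2.1⟩, k.2.2⟩, fun _ => rfl, fun _ => rfl⟩

def opOfNat (n k : ℕ) (x y : Fin n) : Fin n :=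
  ⟨k / n ^ (y.val + n * x.val) % n, Nat.mod_lt _ x.pos⟩

def opEquivFin (n : ℕ) : (Fin n → Fin n → Fin n) ≃ Fin (n ^ (n * n)) :=
  (Equiv.curry _ _ _).symm.trans
    ((finProdFinEquiv.arrowCongr (Equiv.refl _)).trans finFunctionFinEquiv)

theorem opEquivFin_symm_eq_opOfNat (n : ℕ) (i : Fin (n ^ (n * n))) :
    (opEquivFin n).symm i = opOfNat n i := by
  ext x y
  simp [opEquivFin, opOfNat, finFunctionFinEquiv_symm_apply_val]

theorem card_subtype_op_eq_count (n : ℕ) (P : (Fin n → Fin n → Fin n) → Prop)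
    [DecidablePred P] :
    Fintype.card {f // P f} = Nat.count (fun k => P (opOfNat n k)) (n ^ (n * n)) := by
  rw [← Fintype.card_subtype_fin_eq_count]
  refine Fintype.card_congr ((opEquivFin n).symm.subtypeEquiv fun i => ?_).symm
  rw [opEquivFin_symm_eq_opOfNat]

set_option maxRecDepth 100000 in
theorem count_isMoufang_opOfNat_three :
    Nat.count (fun k => IsMoufang (opOfNat 3 k)) (3 ^ (3 * 3)) = 196 := by
  decide +kernel

theorem stmt_11 :
    Fintype.card {f : Fin 3 → Fin 3 → Fin 3 // ∀ x y z : Fin 3, f (f x y) (f z x) = f (f x (f y z)) x} = 196 := by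
  rw [← count_isMoufang_opOfNat_three, ← card_subtype_op_eq_count 3 IsMoufang]
  exact Fintype.card_congr (.refl _)
end

section
/- There exist exactly 215 binary operations on a 3-element set satisfying the left Bol identity x·(y·(x·z)) = (x·(y·x))·z. -/
/-!
A binary operation on `Fin n` is its table of `n * n` entries, that is, the base-`n` digits of a
number below `n ^ (n * n)`. Along this coding the left Bol identity becomes a decidable arithmetic
predicate on codes, and for `n = 3` the kernel counts its solutions among all `3 ^ 9` codes.
-/

def IsLeftBol {α : Type*} (f : α → α → α) : Prop :=
  ∀ x y z, f x (f y (f x z)) = f (f x (f y x)) z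

def binopFinEquiv (m n : ℕ) : (Fin m → Fin m → Fin n) ≃ Fin (n ^ (m * m)) :=
  (Equiv.curry _ _ _).symm.trans
    ((finProdFinEquiv.arrowCongr (Equiv.refl _)).trans finFunctionFinEquiv)

def digitOp (n k x y : ℕ) : ℕ := k / n ^ (y + n * x) % n

theorem binopFinEquiv_symm_apply_val (n : ℕ) (k : Fin (n ^ (n * n))) (x y : Fin n) :
    ((binopFinEquiv n n).symm k x y : ℕ) = digitOp n k x y := by
  simp [binopFinEquiv, digitOp, finFunctionFinEquiv_symm_apply_val, Equiv.arrowCongr]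

def IsLeftBolCode (n k : ℕ) : Prop :=
  ∀ x < n, ∀ y < n, ∀ z < n,
    digitOp n k x (digitOp n k y (digitOp n k x z)) =
      digitOp n k (digitOp n k x (digitOp n k y x)) z

instance (n : ℕ) : DecidablePred (IsLeftBolCode n) := fun _ => by
  unfold IsLeftBolCode; infer_instance

theorem isLeftBol_binopFinEquiv_symm_iff (n : ℕ) (k : Fin (n ^ (n * n))) :
    IsLeftBol ((binopFinEquiv n n).symm k) ↔ IsLeftBolCode n k := by
  simp only [IsLeftBol, IsLeftBolCode, Fin.forall_iff, Fin.ext_iff, binopFinEquiv_symm_apply_val]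

theorem Nat.count_eq_card_fin_subtype (p : ℕ → Prop) [DecidablePred p] (N : ℕ) :
    Nat.count p N = Nat.card {k : Fin N // p k} := by
  rw [Nat.count_eq_card_filter_range, ← Nat.card_eq_finsetCard]
  exact Nat.card_congr ((Fin.equivSubtype.subtypeEquiv fun _ => Iff.rfl).trans
    ((Equiv.subtypeSubtypeEquivSubtypeInter _ p).trans
      (Equiv.subtypeEquivRight fun _ => by rw [Finset.mem_filter, Finset.mem_range]))).symm

theorem card_isLeftBol_eq_count (n : ℕ) :
    Nat.card {f : Fin n → Fin n → Fin n // IsLeftBol f} =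
      Nat.count (IsLeftBolCode n) (n ^ (n * n)) := by
  rw [Nat.count_eq_card_fin_subtype]
  exact Nat.card_congr ((binopFinEquiv n n).symm.subtypeEquiv
    fun k => (isLeftBol_binopFinEquiv_symm_iff n k).symm).symm

theorem count_isLeftBolCode_three : Nat.count (IsLeftBolCode 3) (3 ^ (3 * 3)) = 215 := by
  decide +kernel

theorem stmt_12 :
    Fintype.card {f : Fin 3 → Fin 3 → Fin 3 // ∀ x y z : Fin 3, f x (f y (f x z)) = f (f x (f y x)) z} = 215 := by
  rw [← Nat.card_eq_fintype_card]
  exact (card_isLeftBol_eq_count 3).trans count_isLeftBolCode_three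
end
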